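/- arXiv:1409.4195 — 2 statements merged into one kernel-verified Lean document; each statement's English description precedes it below -/
import Mathlib

section
/- Let A : X → X be a bounded linear operator on a complex Banach space with closed range such that R(A) + N(A) is closed. If φ(A) < π, then X = R(A) ⊕ N(A) (direct sum decomposition). -/
/-- A semi-inner product compatible with the norm of a complex normed space. -/
structure SemiInnerProduct (X : Type*) [NormedAddCommGroup X] [NormedSpace ℂ X] where
  sip : X → X → ℂ
  add_left : ∀ x y z : X, sip (x + y) z = sip x z + sip y z
  smul_left : ∀ (a : ℂ) (x y : X), sip (a • x) y = a * sip x y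
  norm_sq : ∀ x : X, sip x x = (‖x‖ : ℂ) ^ 2
  abs_le : ∀ x y : X, ‖sip x y‖ ≤ ‖x‖ * ‖y‖

/-
Writing `s` for the infimum of the cosines, `Re[Ax, x] ≥ s ‖Ax‖ ‖x‖` for every `x`, with `s > -1`.

If `y = Ax ≠ 0` lies in `N(A)`, then `z = x - t y` satisfies `Az = y` for every `t ≥ 0`; expanding
`‖z‖² = Re[z, z]` bounds `‖z‖` by `‖x‖ - t s ‖y‖`, while `‖z‖ ≥ t ‖y‖ - ‖x‖`, and `t → ∞`
contradicts `s > -1`. Hence `R(A) ∩ N(A) = 0`.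

Since `R(A)`, `N(A)` and `R(A) + N(A)` are closed, the open mapping theorem makes `A` bounded below
on `R(A)`, so the restriction `B` of `A` to `R(A)` satisfies `Re[Bu, u] + ‖Bu‖ ‖u‖ ≥ C ‖u‖²`. Then
`‖(B + t) u‖ ≥ (C / 2) ‖u‖` for all `t ≥ 0`; as `B + t` is invertible for large `t` and
invertibility survives perturbations smaller than such a lower bound, `B` is invertible. Thus
`A(R(A)) = R(A)`, which gives `R(A) + N(A) = X`.
-/

open Function

section NontriviallyNormedField

variable {𝕜 E : Type*} [NontriviallyNormedField 𝕜] [NormedAddCommGroup E] [NormedSpace 𝕜 E]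
  [CompleteSpace E]

theorem Submodule.exists_pos_mul_norm_le_norm_add {p q : Submodule 𝕜 E}
    (hp : IsClosed (p : Set E)) (hq : IsClosed (q : Set E))
    (hpq : IsClosed ((p ⊔ q : Submodule 𝕜 E) : Set E)) (hdisj : p ⊓ q = ⊥) :
    ∃ c > 0, ∀ x ∈ p, ∀ y ∈ q, c * ‖x‖ ≤ ‖x + y‖ := by
  have := hp.completeSpace_coe
  have := hq.completeSpace_coe
  set f : p × q →L[𝕜] E := p.subtypeL.coprod q.subtypeL
  have hinj : Injective f := by
    refine (injective_iff_map_eq_zero f).2 fun ⟨x, y⟩ hf => ?_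
    have hxy : (x : E) + y = 0 := hf
    have hxq : (x : E) ∈ q := by
      rw [eq_neg_of_add_eq_zero_left hxy]
      exact q.neg_mem y.2
    have hx : (x : E) = 0 := by
      simpa [hdisj] using Submodule.mem_inf.2 ⟨x.2, hxq⟩
    have hy : (y : E) = 0 := by
      simpa [hx] using hxy
    simp [Prod.ext_iff, Subtype.ext_iff, hx, hy]
  have hrange : Set.range f = ((p ⊔ q : Submodule 𝕜 E) : Set E) := by
    ext z
    simp only [Set.mem_range, SetLike.mem_coe, Submodule.mem_sup]
    constructor
    · rintro ⟨⟨x, y⟩, rfl⟩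
      exact ⟨x, x.2, y, y.2, rfl⟩
    · rintro ⟨x, hx, y, hy, rfl⟩
      exact ⟨(⟨x, hx⟩, ⟨y, hy⟩), rfl⟩
  obtain ⟨c, hc, hfc⟩ := antilipschitzWith_iff_exists_mul_le_norm.1
    (f.antilipschitz_of_injective_of_isClosed_range hinj (hrange ▸ hpq))
  refine ⟨c, hc, fun x hx y hy => ?_⟩
  calc c * ‖x‖ ≤ c * ‖((⟨x, hx⟩, ⟨y, hy⟩) : p × q)‖ := by
        gcongr
        exact norm_fst_le ((⟨x, hx⟩, ⟨y, hy⟩) : p × q)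
    _ ≤ ‖x + y‖ := hfc _

namespace ContinuousLinearMap

theorem exists_pos_mul_norm_le_norm_apply_of_mem_range (A : E →L[𝕜] E)
    (hR : IsClosed (LinearMap.range (A : E →ₗ[𝕜] E) : Set E))
    (hRN : IsClosed ((LinearMap.range (A : E →ₗ[𝕜] E) ⊔ LinearMap.ker (A : E →ₗ[𝕜] E) :
      Submodule 𝕜 E) : Set E))
    (hdisj : LinearMap.range (A : E →ₗ[𝕜] E) ⊓ LinearMap.ker (A : E →ₗ[𝕜] E) = ⊥) :
    ∃ c > 0, ∀ u ∈ LinearMap.range (A : E →ₗ[𝕜] E), c * ‖u‖ ≤ ‖A u‖ := by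
  have := hR.completeSpace_coe
  obtain ⟨C, hC, hpre⟩ := A.rangeRestrict.exists_preimage_norm_le (by
    rintro ⟨_, x, rfl⟩
    exact ⟨x, rfl⟩)
  obtain ⟨c, hc, hsum⟩ := Submodule.exists_pos_mul_norm_le_norm_add hR A.isClosed_ker hRN hdisj
  refine ⟨c / C, by positivity, fun u hu => ?_⟩
  obtain ⟨x, hxu, hxC⟩ := hpre ⟨A u, LinearMap.mem_range_self _ u⟩
  have hAx : A x = A u := congrArg Subtype.val hxu
  have hker : x - u ∈ LinearMap.ker (A : E →ₗ[𝕜] E) := by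
    simp [LinearMap.mem_ker, hAx]
  calc c / C * ‖u‖ = (c * ‖u‖) / C := by ring
    _ ≤ ‖u + (x - u)‖ / C := by gcongr; exact hsum u hu _ hker
    _ = ‖x‖ / C := by rw [add_sub_cancel]
    _ ≤ ‖A u‖ := div_le_of_le_mul₀ hC.le (norm_nonneg _) (by simpa [mul_comm] using hxC)

theorem isUnit_of_isUnit_of_norm_sub_lt {S T : E →L[𝕜] E} (hS : IsUnit S) {c : ℝ} (hc : 0 < c)
    (hSc : ∀ x, c * ‖x‖ ≤ ‖S x‖) (hTS : ‖T - S‖ < c) : IsUnit T := by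
  obtain ⟨u, rfl⟩ := hS
  have hinv : ‖(↑u⁻¹ : E →L[𝕜] E)‖ ≤ c⁻¹ := by
    refine opNorm_le_bound _ (inv_nonneg.2 hc.le) fun y => ?_
    have hy : (u : E →L[𝕜] E) ((↑u⁻¹ : E →L[𝕜] E) y) = y := by
      change ((u * u⁻¹ : (E →L[𝕜] E)ˣ) : E →L[𝕜] E) y = y
      rw [mul_inv_cancel]
      rfl
    rw [le_inv_mul_iff₀ hc]
    simpa [hy] using hSc ((↑u⁻¹ : E →L[𝕜] E) y)
  have hsmall : ‖-((T - u) * ↑u⁻¹)‖ < 1 := by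
    rw [norm_neg]
    calc ‖(T - u) * ↑u⁻¹‖ ≤ ‖T - u‖ * ‖(↑u⁻¹ : E →L[𝕜] E)‖ := norm_mul_le _ _
      _ ≤ ‖T - u‖ * c⁻¹ := by gcongr
      _ < c * c⁻¹ := by gcongr
      _ = 1 := mul_inv_cancel₀ hc.ne'
  have hT : T = (1 - -((T - u) * ↑u⁻¹)) * u := by
    rw [sub_neg_eq_add, add_mul, one_mul, mul_assoc, Units.inv_mul, mul_one, add_sub_cancel]
  rw [hT]
  exact (isUnit_one_sub_of_norm_lt_one hsmall).mul u.isUnit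

theorem isUnit_add_smul_one_of_norm_lt (T : E →L[𝕜] E) {a : 𝕜} (ha : ‖T‖ < ‖a‖) :
    IsUnit (T + a • 1) := by
  have ha0 : a ≠ 0 := norm_pos_iff.1 ((norm_nonneg T).trans_lt ha)
  have hunit : IsUnit (a • 1 : E →L[𝕜] E) := by
    simpa [Algebra.algebraMap_eq_smul_one] using
      (isUnit_iff_ne_zero.2 ha0).map (algebraMap 𝕜 (E →L[𝕜] E))
  refine isUnit_of_isUnit_of_norm_sub_lt hunit ((norm_nonneg T).trans_lt ha) (fun x => ?_) ?_
  · simp [norm_smul]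
  · simpa using ha

end ContinuousLinearMap

end NontriviallyNormedField

namespace ContinuousLinearMap

variable {𝕜 E : Type*} [RCLike 𝕜] [NormedAddCommGroup E] [NormedSpace 𝕜 E] [CompleteSpace E]

theorem isUnit_of_forall_nonneg_mul_norm_le {T : E →L[𝕜] E} {c : ℝ} (hc : 0 < c)
    (hT : ∀ t : ℝ, 0 ≤ t → ∀ x, c * ‖x‖ ≤ ‖T x + (t : 𝕜) • x‖) : IsUnit T := by
  have hstep : ∀ n : ℕ, ∀ t : ℝ, 0 ≤ t → ‖T‖ < t + n * (c / 2) →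
      IsUnit (T + (t : 𝕜) • 1) := by
    -- descend from beyond `‖T‖` in steps of `c / 2`, each one a perturbation below the bound `c`
    intro n
    induction n with
    | zero =>
      intro t ht htT
      refine T.isUnit_add_smul_one_of_norm_lt ?_
      simpa [abs_of_nonneg ht] using htT
    | succ n ih =>
      intro t ht htT
      refine isUnit_of_isUnit_of_norm_sub_lt (ih (t + c / 2) (by positivity) ?_) hc
        (hT _ (by positivity)) ?_
      · push_cast at htT
        linarith
      · have hdiff : T + (t : 𝕜) • 1 - (T + ((t + c / 2 : ℝ) : 𝕜) • 1) =
            ((-(c / 2) : ℝ) : 𝕜) • (1 : E →L[𝕜] E) := by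
          push_cast
          rw [add_sub_add_left_eq_sub, ← sub_smul]
          ring_nf
        calc _ = ‖((-(c / 2) : ℝ) : 𝕜) • (1 : E →L[𝕜] E)‖ := by rw [hdiff]
          _ ≤ ‖((-(c / 2) : ℝ) : 𝕜)‖ * 1 :=
            (opNorm_smul_le _ _).trans (mul_le_mul_of_nonneg_left norm_id_le (norm_nonneg _))
          _ < c := by simp [abs_of_pos hc]; linarith
  obtain ⟨n, hn⟩ := exists_nat_gt (‖T‖ / (c / 2))
  simpa using hstep n 0 le_rfl (by rwa [zero_add, ← div_lt_iff₀ (by positivity)])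

end ContinuousLinearMap

theorem LinearMap.range_sup_ker_eq_top_of_range_le_map {R M : Type*} [Ring R] [AddCommGroup M]
    [Module R M] (f : M →ₗ[R] M) (h : range f ≤ (range f).map f) : range f ⊔ ker f = ⊤ := by
  refine eq_top_iff.2 fun x _ => ?_
  obtain ⟨u, hu, hfu⟩ := h (mem_range_self f x)
  refine Submodule.mem_sup.2 ⟨u, hu, x - u, ?_, add_sub_cancel u x⟩
  simp [mem_ker, hfu]

namespace SemiInnerProduct

variable {X : Type*} [NormedAddCommGroup X] [NormedSpace ℂ X] (sip : SemiInnerProduct X)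

theorem sip_zero_left (y : X) : sip.sip 0 y = 0 := by
  simpa using sip.smul_left 0 0 y

theorem sip_sub_smul_left (a : ℂ) (x y z : X) :
    sip.sip (x - a • y) z = sip.sip x z - a * sip.sip y z := by
  rw [sub_eq_add_neg, sip.add_left, ← neg_smul, sip.smul_left]
  ring

theorem re_sip_self (x : X) : (sip.sip x x).re = ‖x‖ ^ 2 := by
  rw [sip.norm_sq, ← Complex.ofReal_pow, Complex.ofReal_re]

theorem re_sip_le (x y : X) : (sip.sip x y).re ≤ ‖x‖ * ‖y‖ :=
  (Complex.re_le_norm _).trans (sip.abs_le x y)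

theorem neg_le_re_sip (x y : X) : -(‖x‖ * ‖y‖) ≤ (sip.sip x y).re :=
  neg_le_of_abs_le ((Complex.abs_re_le_norm _).trans (sip.abs_le x y))

theorem re_sip_add_norm_mul_norm_le (v x : X) {t : ℝ} (ht : 0 ≤ t) :
    (sip.sip v x).re + ‖v‖ * ‖x‖ ≤ 2 * (‖v + (t : ℂ) • x‖ * ‖x‖) := by
  have hre : (sip.sip (v + (t : ℂ) • x) x).re = (sip.sip v x).re + t * ‖x‖ ^ 2 := by
    rw [sip.add_left, sip.smul_left, Complex.add_re, Complex.re_ofReal_mul, sip.re_sip_self]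
  have hnorm : ‖v‖ ≤ ‖v + (t : ℂ) • x‖ + t * ‖x‖ := by
    calc ‖v‖ = ‖(v + (t : ℂ) • x) - (t : ℂ) • x‖ := by rw [add_sub_cancel_right]
      _ ≤ ‖v + (t : ℂ) • x‖ + ‖(t : ℂ) • x‖ := norm_sub_le _ _
      _ = ‖v + (t : ℂ) • x‖ + t * ‖x‖ := by
        rw [norm_smul, Complex.norm_real, Real.norm_of_nonneg ht]
  nlinarith [sip.re_sip_le (v + (t : ℂ) • x) x, norm_nonneg x]

def restrict (p : Submodule ℂ X) : SemiInnerProduct p where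
  sip x y := sip.sip x y
  add_left x y z := sip.add_left x y z
  smul_left a x y := sip.smul_left a x y
  norm_sq x := sip.norm_sq x
  abs_le x y := sip.abs_le x y

theorem surjective_of_le_re_sip_add_norm_mul_norm [CompleteSpace X] (T : X →L[ℂ] X) {C : ℝ}
    (hC : 0 < C) (hT : ∀ x, C * ‖x‖ ^ 2 ≤ (sip.sip (T x) x).re + ‖T x‖ * ‖x‖) :
    Surjective T := by
  refine (ContinuousLinearMap.isUnit_iff_bijective.1
    (ContinuousLinearMap.isUnit_of_forall_nonneg_mul_norm_le (half_pos hC) fun t ht x => ?_)).2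
  rcases (norm_nonneg x).eq_or_lt with hx | hx
  · simp [← hx]
  · show C / 2 * ‖x‖ ≤ ‖T x + (t : ℂ) • x‖
    refine le_of_mul_le_mul_right ?_ hx
    nlinarith [hT x, sip.re_sip_add_norm_mul_norm_le (T x) x ht]

/-- Its infimum is `cos φ(A)`. -/
def cosAngleSet (A : X →L[ℂ] X) : Set ℝ :=
  {r : ℝ | ∃ x : X, x ∉ LinearMap.ker (A : X →ₗ[ℂ] X) ∧ r = (sip.sip (A x) x).re / (‖A x‖ * ‖x‖)}

variable (A : X →L[ℂ] X)

theorem bddBelow_cosAngleSet : BddBelow (sip.cosAngleSet A) := by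
  refine ⟨-1, fun r ⟨x, hx, hr⟩ => ?_⟩
  have hAx : A x ≠ 0 := hx
  have hx0 : x ≠ 0 := fun h => hAx (by simp [h])
  rw [hr, le_div_iff₀ (by positivity)]
  linarith [sip.neg_le_re_sip (A x) x]

theorem sInf_cosAngleSet_mul_le (x : X) :
    sInf (sip.cosAngleSet A) * (‖A x‖ * ‖x‖) ≤ (sip.sip (A x) x).re := by
  by_cases hAx : A x = 0
  · simp [hAx, sip_zero_left]
  have hx0 : x ≠ 0 := fun h => hAx (by simp [h])
  rw [← le_div_iff₀ (by positivity)]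
  exact csInf_le (sip.bddBelow_cosAngleSet A) ⟨x, hAx, rfl⟩

theorem range_inf_ker_eq_bot_of_neg_one_lt (h : -1 < sInf (sip.cosAngleSet A)) :
    LinearMap.range (A : X →ₗ[ℂ] X) ⊓ LinearMap.ker (A : X →ₗ[ℂ] X) = ⊥ := by
  set s := sInf (sip.cosAngleSet A)
  refine eq_bot_iff.2 fun y hy => ?_
  obtain ⟨⟨x, rfl⟩, hAAx⟩ := Submodule.mem_inf.1 hy
  have hAAx : A (A x) = 0 := hAAx
  rw [Submodule.mem_bot]
  change A x = 0
  by_contra hAx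
  have hbound : ∀ t : ℝ, 0 ≤ t → t * ((1 + s) * ‖A x‖) ≤ 2 * ‖x‖ := by
    intro t ht
    set z := x - (t : ℂ) • A x
    have hAz : A z = A x := by simp [z, hAAx]
    have hz : 0 < ‖z‖ := norm_pos_iff.2 fun h => hAx (by rw [← hAz, h, map_zero])
    have hsq : ‖z‖ ^ 2 = (sip.sip x z).re - t * (sip.sip (A x) z).re := by
      rw [← sip.re_sip_self, sip_sub_smul_left, Complex.sub_re, Complex.re_ofReal_mul]
    have hangle := sip.sInf_cosAngleSet_mul_le A z
    rw [hAz] at hangle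
    have hupper : ‖z‖ ≤ ‖x‖ - t * s * ‖A x‖ := by
      refine le_of_mul_le_mul_right ?_ hz
      nlinarith [sip.re_sip_le x z, mul_le_mul_of_nonneg_left hangle ht]
    have hlower : t * ‖A x‖ - ‖x‖ ≤ ‖z‖ := by
      calc t * ‖A x‖ - ‖x‖ = ‖(t : ℂ) • A x‖ - ‖x‖ := by
            rw [norm_smul, Complex.norm_real, Real.norm_of_nonneg ht]
        _ ≤ ‖z‖ := by rw [norm_sub_rev]; exact norm_sub_norm_le _ _
    linarith
  have hpos : 0 < (1 + s) * ‖A x‖ := mul_pos (by linarith) (norm_pos_iff.2 hAx)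
  have := hbound ((2 * ‖x‖ + 1) / ((1 + s) * ‖A x‖)) (by positivity)
  rw [div_mul_cancel₀ _ hpos.ne'] at this
  linarith

end SemiInnerProduct

/-- Main theorem: if `A` has closed range, `R(A) + N(A)` is closed and `φ(A) < π`,
then `X = R(A) ⊕ N(A)`. -/
theorem range_ker_complementary_of_angle_lt_pi
    (X : Type*) [NormedAddCommGroup X] [NormedSpace ℂ X] [CompleteSpace X]
    (sip : SemiInnerProduct X) (A : X →L[ℂ] X)
    (hR : IsClosed ((LinearMap.range (A : X →ₗ[ℂ] X) : Submodule ℂ X) : Set X))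
    (hRN : IsClosed ((LinearMap.range (A : X →ₗ[ℂ] X) ⊔ LinearMap.ker (A : X →ₗ[ℂ] X) : Submodule ℂ X) : Set X))
    (hangle : -1 < sInf {r : ℝ | ∃ x : X, x ∉ LinearMap.ker (A : X →ₗ[ℂ] X) ∧
      r = (sip.sip (A x) x).re / (‖A x‖ * ‖x‖)}) :
    LinearMap.range (A : X →ₗ[ℂ] X) ⊔ LinearMap.ker (A : X →ₗ[ℂ] X) = ⊤ ∧
    LinearMap.range (A : X →ₗ[ℂ] X) ⊓ LinearMap.ker (A : X →ₗ[ℂ] X) = ⊥ := by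
  set R := LinearMap.range (A : X →ₗ[ℂ] X)
  set s := sInf (sip.cosAngleSet A)
  have hs : -1 < s := hangle
  have hdisj := sip.range_inf_ker_eq_bot_of_neg_one_lt A hs
  refine ⟨?_, hdisj⟩
  obtain ⟨c, hc, hAc⟩ := A.exists_pos_mul_norm_le_norm_apply_of_mem_range hR hRN hdisj
  have := hR.completeSpace_coe
  have hB : Surjective (A.restrict (p := R) (q := R) fun x _ => LinearMap.mem_range_self _ x) := by
    refine (sip.restrict R).surjective_of_le_re_sip_add_norm_mul_norm _
      (mul_pos (by linarith : 0 < s + 1) hc) fun u => ?_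
    calc (s + 1) * c * ‖(u : X)‖ ^ 2 = (s + 1) * ((c * ‖(u : X)‖) * ‖(u : X)‖) := by ring
      _ ≤ (s + 1) * (‖A u‖ * ‖(u : X)‖) := by
        gcongr
        · linarith
        · exact hAc u u.2
      _ ≤ (sip.sip (A u) u).re + ‖A u‖ * ‖(u : X)‖ := by
        linarith [sip.sInf_cosAngleSet_mul_le A u]
  refine LinearMap.range_sup_ker_eq_top_of_range_le_map _ fun y hy => ?_
  obtain ⟨u, hu⟩ := hB ⟨y, hy⟩
  exact ⟨u, u.2, congrArg Subtype.val hu⟩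
end

section
/- Let X be a complex Hilbert space and A : X → X a bounded linear operator with R(A) ⊥ N(A) and φ(A) > π/2. Then the angle of A equals the angle of its restriction to N(A)^⊥: φ(A) = φ(A|_{N(A)^⊥}). -/
/-! Projecting `x ∉ N(A)` onto `N(A)ᗮ` changes neither `A x` nor `⟪A x, x⟫` (the latter because
`R(A) ⊥ N(A)`), and it does not increase `‖x‖`. So a negative cosine `re ⟪A x, x⟫ / (‖A x‖ ‖x‖)`
can only decrease under the projection. Since `φ(A) > π/2` says that the infimum of these cosines
is negative, only negative cosines matter, and the infimum over `N(A)ᗮ` is the same. -/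

open RCLike Submodule

theorem csInf_eq_of_subset_of_forall_lt {α : Type*} [ConditionallyCompleteLinearOrder α]
    {S T : Set α} {a : α} (hTS : T ⊆ S) (hS : BddBelow S) (hSne : S.Nonempty)
    (hlt : sInf S < a) (hT : ∀ r ∈ S, r < a → ∃ s ∈ T, s ≤ r) : sInf T = sInf S := by
  obtain ⟨r₀, hr₀S, hr₀⟩ := exists_lt_of_csInf_lt hSne hlt
  obtain ⟨s₀, hs₀T, hs₀⟩ := hT r₀ hr₀S hr₀
  have hT_bdd : BddBelow T := hS.mono hTS
  refine le_antisymm (le_csInf hSne fun r hr => ?_) (csInf_le_csInf hS ⟨s₀, hs₀T⟩ hTS)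
  rcases lt_or_ge r a with hra | har
  · obtain ⟨s, hsT, hs⟩ := hT r hr hra
    exact (csInf_le hT_bdd hsT).trans hs
  · exact (csInf_le hT_bdd hs₀T).trans (hs₀.trans (hr₀.trans_le har).le)

section

variable {𝕜 E : Type*} [RCLike 𝕜] [NormedAddCommGroup E] [InnerProductSpace 𝕜 E]

theorem neg_one_le_re_inner_div_norm_mul_norm (x y : E) :
    -1 ≤ re (inner 𝕜 x y) / (‖x‖ * ‖y‖) := by
  refine neg_le_of_abs_le ?_
  rw [abs_div, abs_of_nonneg (by positivity : (0 : ℝ) ≤ ‖x‖ * ‖y‖)]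
  exact div_le_one_of_le₀ ((abs_re_le_norm _).trans (norm_inner_le_norm x y)) (by positivity)

variable [CompleteSpace E] (A : E →L[𝕜] E)

theorem apply_starProjection_orthogonal_ker (x : E) :
    A ((LinearMap.ker (A : E →ₗ[𝕜] E))ᗮ.starProjection x) = A x := by
  set K := LinearMap.ker (A : E →ₗ[𝕜] E)
  have hK : A (K.starProjection x) = 0 := K.starProjection_apply_mem x
  conv_rhs => rw [← K.starProjection_add_starProjection_orthogonal x]
  rw [map_add, hK, zero_add]

theorem inner_apply_starProjection_orthogonal_ker
    (hperp : ∀ x : E, ∀ y ∈ LinearMap.ker (A : E →ₗ[𝕜] E), inner 𝕜 (A x) y = 0) (x : E) :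
    inner 𝕜 (A x) ((LinearMap.ker (A : E →ₗ[𝕜] E))ᗮ.starProjection x) = inner 𝕜 (A x) x := by
  set K := LinearMap.ker (A : E →ₗ[𝕜] E)
  rw [starProjection_orthogonal_val, inner_sub_right, hperp x _ (K.starProjection_apply_mem x),
    sub_zero]

theorem re_inner_div_starProjection_orthogonal_ker_le
    (hperp : ∀ x : E, ∀ y ∈ LinearMap.ker (A : E →ₗ[𝕜] E), inner 𝕜 (A x) y = 0) {x : E}
    (hx : A x ≠ 0) (hre : re (inner 𝕜 (A x) x) ≤ 0) :
    let v := (LinearMap.ker (A : E →ₗ[𝕜] E))ᗮ.starProjection x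
    re (inner 𝕜 (A v) v) / (‖A v‖ * ‖v‖) ≤ re (inner 𝕜 (A x) x) / (‖A x‖ * ‖x‖) := by
  intro v
  have hAv : A v = A x := apply_starProjection_orthogonal_ker A x
  have hv : v ≠ 0 := fun h => hx (by rw [← hAv, h, map_zero])
  have hpos : 0 < ‖A x‖ * ‖v‖ := by positivity
  have hle : ‖A x‖ * ‖v‖ ≤ ‖A x‖ * ‖x‖ :=
    mul_le_mul_of_nonneg_left (norm_starProjection_apply_le _ x) (norm_nonneg _)
  rw [hAv, inner_apply_starProjection_orthogonal_ker A hperp]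
  simpa only [neg_div, neg_le_neg_iff] using
    div_le_div_of_nonneg_left (neg_nonneg.2 hre) hpos hle

end

/-- If `R(A) ⊥ N(A)` and `φ(A) > π/2`, then the angle of `A` equals the angle of its
restriction to `N(A)^⊥`. -/
theorem angle_eq_angle_restriction
    (X : Type*) [NormedAddCommGroup X] [InnerProductSpace ℂ X] [CompleteSpace X]
    (A : X →L[ℂ] X)
    (hperp : ∀ x : X, ∀ y ∈ LinearMap.ker (A : X →ₗ[ℂ] X), (inner ℂ (A x) y : ℂ) = 0)
    (hangle : Real.pi / 2 < Real.arccos (sInf {r : ℝ | ∃ x : X, x ∉ LinearMap.ker (A : X →ₗ[ℂ] X) ∧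
      r = (inner ℂ (A x) x : ℂ).re / (‖A x‖ * ‖x‖)})) :
    Real.arccos (sInf {r : ℝ | ∃ x : X, x ∉ LinearMap.ker (A : X →ₗ[ℂ] X) ∧
      r = (inner ℂ (A x) x : ℂ).re / (‖A x‖ * ‖x‖)}) =
    Real.arccos (sInf {r : ℝ | ∃ x : X, x ∈ (LinearMap.ker (A : X →ₗ[ℂ] X))ᗮ ∧ x ≠ 0 ∧
      r = (inner ℂ (A x) x : ℂ).re / (‖A x‖ * ‖x‖)}) := by
  set K := LinearMap.ker (A : X →ₗ[ℂ] X)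
  have hneg := lt_of_not_ge (mt Real.arccos_le_pi_div_two.2 hangle.not_ge)
  refine congrArg Real.arccos (csInf_eq_of_subset_of_forall_lt ?_ ?_ ?_ hneg ?_).symm
  · rintro r ⟨x, hxK, hx, rfl⟩
    exact ⟨x, fun hx' => hx (K.orthogonal_disjoint.le_bot ⟨hx', hxK⟩), rfl⟩
  · refine ⟨-1, ?_⟩
    rintro r ⟨x, -, rfl⟩
    exact neg_one_le_re_inner_div_norm_mul_norm (𝕜 := ℂ) (A x) x
  · refine Set.nonempty_iff_ne_empty.2 fun h => ?_
    rw [h, Real.sInf_empty] at hneg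
    exact hneg.false
  · rintro r ⟨x, hx, rfl⟩ hr
    have hre := (neg_of_div_neg_left hr (by positivity)).le
    have hv : Kᗮ.starProjection x ≠ 0 := fun h =>
      hx (show A x = 0 by rw [← apply_starProjection_orthogonal_ker A x, h, map_zero])
    exact ⟨_, ⟨_, Kᗮ.starProjection_apply_mem x, hv, rfl⟩,
      re_inner_div_starProjection_orthogonal_ker_le A hperp hx hre⟩
end
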